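/- The Riccati operator is monotone in its second argument: if P₁ ≥ P₂ ≥ 0 in the Loewner order, then R(A,P₁,B,R₀) ≥ R(A,P₂,B,R₀), where R(A,P,B,R₀) = Aᵀ(P - P B (R₀ + Bᵀ P B)⁻¹ Bᵀ P)A. -/

import Mathlib

/-!
Completing the square shows that, for `P ⪰ 0` and `R₀ ≻ 0`, the Riccati operator is the minimum
over all feedback gains `K` of the closed-loop cost `(A + B K)ᵀ P (A + B K) + Kᵀ R₀ K`, attained at
`K = -(R₀ + Bᵀ P B)⁻¹ Bᵀ P A`. Each closed-loop cost is monotone in `P`, hence so is their minimum: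
with `K₁` optimal for `P₁`, `Ric(P₂) ≤ cost_{P₂}(K₁) ≤ cost_{P₁}(K₁) = Ric(P₁)`.
-/

open Matrix
open scoped MatrixOrder

namespace Matrix

section CommRing

variable {ι κ α : Type*} [Fintype ι] [Fintype κ] [DecidableEq κ] [CommRing α]

noncomputable def riccati (A P : Matrix ι ι α) (B : Matrix ι κ α) (R : Matrix κ κ α) :
    Matrix ι ι α :=
  Aᵀ * (P - P * B * (R + Bᵀ * P * B)⁻¹ * Bᵀ * P) * A

noncomputable def riccatiGain (A P : Matrix ι ι α) (B : Matrix ι κ α) (R : Matrix κ κ α) :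
    Matrix κ ι α :=
  (R + Bᵀ * P * B)⁻¹ * Bᵀ * P * A

def feedbackCost (A P : Matrix ι ι α) (B : Matrix ι κ α) (R : Matrix κ κ α) (K : Matrix κ ι α) :
    Matrix ι ι α :=
  (A + B * K)ᵀ * P * (A + B * K) + Kᵀ * R * K

theorem feedbackCost_eq_riccati_add (A P : Matrix ι ι α) (B : Matrix ι κ α) (R : Matrix κ κ α)
    (K : Matrix κ ι α) (hP : P.IsSymm) (hR : R.IsSymm) (hS : IsUnit (R + Bᵀ * P * B).det) :
    feedbackCost A P B R K = riccati A P B R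
      + (K + riccatiGain A P B R)ᵀ * (R + Bᵀ * P * B) * (K + riccatiGain A P B R) := by
  have hM : (R + Bᵀ * P * B)⁻¹.IsSymm :=
    (hR.add (by simp [IsSymm, hP.eq, Matrix.mul_assoc])).inv
  unfold feedbackCost riccati riccatiGain
  set S := R + Bᵀ * P * B
  have hR_eq : R = S - Bᵀ * P * B := (add_sub_cancel_right R _).symm
  have hS_inv (X : Matrix κ ι α) : S * (S⁻¹ * X) = X := mul_nonsing_inv_cancel_left _ _ hS
  have hinv_S (X : Matrix κ ι α) : S⁻¹ * (S * X) = X := nonsing_inv_mul_cancel_left _ _ hS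
  clear_value S
  subst hR_eq
  simp only [transpose_add, transpose_mul, transpose_transpose, hP.eq, hM.eq,
    Matrix.sub_mul, Matrix.mul_sub, Matrix.add_mul, Matrix.mul_add, Matrix.mul_assoc,
    hS_inv, hinv_S]
  abel

end CommRing

section Real

variable {ι κ : Type*} [Fintype ι] [Fintype κ]

theorem PosSemidef.transpose_mul_mul_same {P : Matrix ι ι ℝ} (hP : P.PosSemidef)
    (C : Matrix ι κ ℝ) : (Cᵀ * P * C).PosSemidef := by
  simpa using hP.conjTranspose_mul_mul_same C

theorem PosDef.add_transpose_mul_mul_same {R : Matrix κ κ ℝ} (hR : R.PosDef)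
    {P : Matrix ι ι ℝ} (hP : P.PosSemidef) (B : Matrix ι κ ℝ) : (R + Bᵀ * P * B).PosDef :=
  hR.add_posSemidef (hP.transpose_mul_mul_same B)

theorem feedbackCost_mono {P₁ P₂ : Matrix ι ι ℝ} (hP : P₂ ≤ P₁) (A : Matrix ι ι ℝ)
    (B : Matrix ι κ ℝ) (R : Matrix κ κ ℝ) (K : Matrix κ ι ℝ) :
    feedbackCost A P₂ B R K ≤ feedbackCost A P₁ B R K := by
  have h := star_left_conjugate_le_conjugate hP (A + B * K)
  rw [star_eq_conjTranspose, conjTranspose_eq_transpose_of_trivial] at h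
  exact add_le_add_left h _

variable [DecidableEq κ] {P : Matrix ι ι ℝ} {R : Matrix κ κ ℝ}

theorem feedbackCost_eq_riccati_add_of_posDef (hP : P.PosSemidef) (hR : R.PosDef)
    (A : Matrix ι ι ℝ) (B : Matrix ι κ ℝ) (K : Matrix κ ι ℝ) :
    feedbackCost A P B R K = riccati A P B R
      + (K + riccatiGain A P B R)ᵀ * (R + Bᵀ * P * B) * (K + riccatiGain A P B R) :=
  feedbackCost_eq_riccati_add A P B R K (by simpa using hP.isHermitian)
    (by simpa using hR.isHermitian)
    ((isUnit_iff_isUnit_det _).mp (hR.add_transpose_mul_mul_same hP B).isUnit)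

theorem riccati_le_feedbackCost (hP : P.PosSemidef) (hR : R.PosDef)
    (A : Matrix ι ι ℝ) (B : Matrix ι κ ℝ) (K : Matrix κ ι ℝ) :
    riccati A P B R ≤ feedbackCost A P B R K := by
  rw [le_iff, feedbackCost_eq_riccati_add_of_posDef hP hR, add_sub_cancel_left]
  exact (hR.add_transpose_mul_mul_same hP B).posSemidef.transpose_mul_mul_same _

theorem feedbackCost_neg_riccatiGain (hP : P.PosSemidef) (hR : R.PosDef)
    (A : Matrix ι ι ℝ) (B : Matrix ι κ ℝ) :
    feedbackCost A P B R (-riccatiGain A P B R) = riccati A P B R := by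
  simp [feedbackCost_eq_riccati_add_of_posDef hP hR]

theorem riccati_mono {P₁ P₂ : Matrix ι ι ℝ} (hP₂ : P₂.PosSemidef) (hP : P₂ ≤ P₁)
    (hR : R.PosDef) (A : Matrix ι ι ℝ) (B : Matrix ι κ ℝ) :
    riccati A P₂ B R ≤ riccati A P₁ B R := by
  have hP₁ : P₁.PosSemidef := by simpa using hP₂.add (le_iff.mp hP)
  let K := -riccatiGain A P₁ B R
  calc riccati A P₂ B R ≤ feedbackCost A P₂ B R K := riccati_le_feedbackCost hP₂ hR A B K
    _ ≤ feedbackCost A P₁ B R K := feedbackCost_mono hP A B R K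
    _ = riccati A P₁ B R := feedbackCost_neg_riccatiGain hP₁ hR A B

end Real

end Matrix

theorem riccati_operator_monotone_general {n m : ℕ}
    (A : Matrix (Fin n) (Fin n) ℝ) (P₁ P₂ : Matrix (Fin n) (Fin n) ℝ)
    (B : Matrix (Fin n) (Fin m) ℝ) (R₀ : Matrix (Fin m) (Fin m) ℝ)
    (hP₂ : P₂.PosSemidef) (hP : (P₁ - P₂).PosSemidef)
    (hR : R₀.PosDef) :
    (Aᵀ * (P₁ - P₁ * B * (R₀ + Bᵀ * P₁ * B)⁻¹ * Bᵀ * P₁) * A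
      - Aᵀ * (P₂ - P₂ * B * (R₀ + Bᵀ * P₂ * B)⁻¹ * Bᵀ * P₂) * A).PosSemidef :=
  riccati_mono hP₂ hP hR A B

theorem riccati_operator_monotone {n m : ℕ}
    (A : Matrix (Fin n) (Fin n) ℝ) (P₁ P₂ : Matrix (Fin n) (Fin n) ℝ)
    (B : Matrix (Fin n) (Fin m) ℝ) (R₀ : Matrix (Fin m) (Fin m) ℝ)
    (hP₁ : P₁.PosSemidef) (hP₂ : P₂.PosSemidef) (hP : (P₁ - P₂).PosSemidef)
    (hR : R₀.PosDef) :
    (Aᵀ * (P₁ - P₁ * B * (R₀ + Bᵀ * P₁ * B)⁻¹ * Bᵀ * P₁) * A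
      - Aᵀ * (P₂ - P₂ * B * (R₀ + Bᵀ * P₂ * B)⁻¹ * Bᵀ * P₂) * A).PosSemidef :=
  riccati_operator_monotone_general A P₁ P₂ B R₀ hP₂ hP hR
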